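/- arXiv:1802.09330 — 4 statements merged into one kernel-verified Lean document; each statement's English description precedes it below -/
import Mathlib

section
/- If X ∈ H_n satisfies X ⊥ range Γ (in the trace inner product), then for any Λ in the open set L₊ = {Λ ∈ H_n : G(z)*ΛG(z) > 0 for all z ∈ 𝕋}, the function G*(Λ + X)G equals G*ΛG pointwise on 𝕋; hence the parametrization Λ ↦ G*ΛG restricted to L₊ ∩ range Γ loses no generality. -/
/-!
Take `Φ = G* X G`, which is Hermitian, in the orthogonality relation. By cyclicity of the trace,
`tr (G Φ G* X*) = tr (Φ Φ*) = ‖Φ‖²` (Frobenius norm), so the orthogonality says that the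
continuous nonnegative function `θ ↦ ‖Φ(e^{iθ})‖²` has zero integral over `[-π, π]`; hence
`Φ ≡ 0` on the circle, and adding `X` to `Λ` does not change `G* Λ G`.
-/

open Real
open scoped Matrix ComplexOrder

attribute [local instance] Matrix.frobeniusSeminormedAddCommGroup
  Matrix.frobeniusNormedAddCommGroup Matrix.frobeniusNormedSpace

namespace Matrix

variable {l m n 𝕜 : Type*} [Fintype l] [Fintype m] [Fintype n] [RCLike 𝕜]

theorem trace_mul_conjTranspose_self_eq_frobenius_norm_sq (A : Matrix m n 𝕜) :
    (A * Aᴴ).trace = ((‖A‖ ^ 2 : ℝ) : 𝕜) := by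
  have hsq : ‖A‖ ^ 2 = ∑ i, ∑ j, ‖A i j‖ ^ 2 := by
    rw [frobenius_norm_def, ← Real.rpow_natCast, ← Real.rpow_mul (by positivity)]
    norm_num
  simp [hsq, trace, mul_apply, RCLike.mul_conj]

theorem trace_mul_mul_conjTranspose_mul_conjTranspose {R : Type*} [CommSemiring R] [StarRing R]
    (G : Matrix l m R) (N : Matrix m m R) (X : Matrix l l R) :
    (G * N * Gᴴ * Xᴴ).trace = (N * (Gᴴ * X * G)ᴴ).trace := by
  rw [Matrix.mul_assoc, Matrix.mul_assoc, trace_mul_comm]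
  simp only [conjTranspose_mul, conjTranspose_conjTranspose, Matrix.mul_assoc]

theorem trace_intervalIntegral_mul {F : ℝ → Matrix n n 𝕜} (hF : Continuous F) (a b : ℝ)
    (X : Matrix n n 𝕜) : ((∫ θ in a..b, F θ) * X).trace = ∫ θ in a..b, (F θ * X).trace := by
  -- The Frobenius topology is not reducibly the product topology, so this is not inferred.
  let _ : ENormedAddMonoid (Matrix n n 𝕜) :=
    frobeniusNormedAddCommGroup.toENormedAddCommMonoid.toENormedAddMonoid
  let L : Matrix n n 𝕜 →L[𝕜] 𝕜 :=
    LinearMap.toContinuousLinearMap (traceLinearMap n 𝕜 𝕜 ∘ₗ LinearMap.mulRight 𝕜 X)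
  exact (L.intervalIntegral_comp_comm (hF.intervalIntegrable a b)).symm

end Matrix

theorem eqOn_zero_of_intervalIntegral_eq_zero {f : ℝ → ℝ} {a b : ℝ} (hab : a ≤ b)
    (hf : Continuous f) (hf₀ : ∀ x, 0 ≤ f x) (h : ∫ x in a..b, f x = 0) :
    Set.EqOn f 0 (Set.Ioc a b) :=
  MeasureTheory.Measure.eqOn_Ioc_of_ae_eq _
    ((intervalIntegral.integral_eq_zero_iff_of_le_of_nonneg_ae hab
      (.of_forall fun x => hf₀ x) (hf.intervalIntegrable a b)).mp h)
    hf.continuousOn continuousOn_const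

theorem Circle.eq_zero_of_intervalIntegral_comp_exp_eq_zero {g : Circle → ℝ} (hg : Continuous g)
    (hg₀ : ∀ z, 0 ≤ g z) (h : ∫ θ in -π..π, g (Circle.exp θ) = 0) : g = 0 := by
  funext z
  rw [← Circle.exp_arg z]
  exact eqOn_zero_of_intervalIntegral_eq_zero (by linarith [pi_pos]) (by fun_prop)
    (fun θ => hg₀ _) h (Complex.arg_mem_Ioc z)

theorem stmt_7_general (n m : ℕ) (G : C(Circle, Matrix (Fin n) (Fin m) ℂ))
    (X : Matrix (Fin n) (Fin n) ℂ) (hX : X.IsHermitian)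
    (horth : ∀ Φ : C(Circle, Matrix (Fin m) (Fin m) ℂ), (∀ z, (Φ z).IsHermitian) →
      ((((2 * π)⁻¹ •
          ∫ θ in (-π)..π,
            G (Circle.exp θ) * Φ (Circle.exp θ) * (G (Circle.exp θ))ᴴ) : Matrix (Fin n) (Fin n) ℂ)
        * Xᴴ).trace = 0)
    (Λ : Matrix (Fin n) (Fin n) ℂ) :
    ∀ z : Circle, (G z)ᴴ * (Λ + X) * G z = (G z)ᴴ * Λ * G z := by
  let Φ : C(Circle, Matrix (Fin m) (Fin m) ℂ) := ⟨fun z => (G z)ᴴ * X * G z, by fun_prop⟩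
  have hΦ : ∀ z, (Φ z).IsHermitian := fun z => Matrix.isHermitian_conjTranspose_mul_mul (G z) hX
  have htrace : ((∫ θ in -π..π, G (Circle.exp θ) * Φ (Circle.exp θ) * (G (Circle.exp θ))ᴴ) *
      Xᴴ).trace = ((∫ θ in -π..π, ‖Φ (Circle.exp θ)‖ ^ 2 : ℝ) : ℂ) := by
    rw [Matrix.trace_intervalIntegral_mul (by fun_prop), ← intervalIntegral.integral_ofReal]
    refine intervalIntegral.integral_congr fun θ _ => ?_
    exact (Matrix.trace_mul_mul_conjTranspose_mul_conjTranspose _ _ _).trans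
      (Matrix.trace_mul_conjTranspose_self_eq_frobenius_norm_sq _)
  have hint : ∫ θ in -π..π, ‖Φ (Circle.exp θ)‖ ^ 2 = 0 := by
    simpa [Matrix.smul_mul, htrace, pi_ne_zero] using horth Φ hΦ
  have hzero := Circle.eq_zero_of_intervalIntegral_comp_exp_eq_zero
    (g := fun z => ‖Φ z‖ ^ 2) (by fun_prop) (fun z => by positivity) hint
  intro z
  have hz : (G z)ᴴ * X * G z = 0 := by simpa [Φ] using congr_fun hzero z
  rw [Matrix.mul_add, Matrix.add_mul, hz, add_zero]

/-- If a Hermitian `X` is orthogonal (in the trace inner product) to the range of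
`Γ(Φ) = ∫ G Φ G* dθ/(2π)`, then for every `Λ` in
`L₊ = {Λ Hermitian : G(z)*ΛG(z) > 0 on 𝕋}` the function `G*(Λ+X)G` coincides with `G*ΛG`
pointwise on the circle; hence the parametrization `Λ ↦ G*ΛG` restricted to `L₊ ∩ range Γ`
loses no generality. -/
theorem stmt_7 (n m : ℕ) (G : C(Circle, Matrix (Fin n) (Fin m) ℂ))
    (X : Matrix (Fin n) (Fin n) ℂ) (hX : X.IsHermitian)
    (horth : ∀ Φ : C(Circle, Matrix (Fin m) (Fin m) ℂ), (∀ z, (Φ z).IsHermitian) →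
      ((((2 * π)⁻¹ •
          ∫ θ in (-π)..π,
            G (Circle.exp θ) * Φ (Circle.exp θ) * (G (Circle.exp θ))ᴴ) : Matrix (Fin n) (Fin n) ℂ)
        * Xᴴ).trace = 0)
    (Λ : Matrix (Fin n) (Fin n) ℂ) (hΛ : Λ.IsHermitian)
    (hpos : ∀ z : Circle, ((G z)ᴴ * Λ * G z).PosDef) :
    ∀ z : Circle, (G z)ᴴ * (Λ + X) * G z = (G z)ᴴ * Λ * G z :=
  stmt_7_general n m G X hX horth Λ
end

section
/- The partial derivative of the moment map f(ψ,Λ) = ∫ G ψ (G*ΛG)^{-1} G* dθ/(2π) with respect to ψ, namely the linear operator δψ ↦ ∫ G δψ (G*ΛG)^{-1} G* dθ/(2π), depends continuously (in the operator norm) on (ψ,Λ) ∈ C₊(𝕋) × L₊^Γ, with the bound ‖f'_1(ψ,Λ_k) − f'_1(ψ,Λ)‖ ≤ n G_max² · sup_z ‖(G*Λ_k G)^{-1} − (G*ΛG)^{-1}‖_F. -/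
/-!
Pointwise, `G (A'⁻¹ − A⁻¹) G*` has Frobenius norm at most `‖G‖² ‖A'⁻¹ − A⁻¹‖`, and averaging over
the circle against `δψ` with `‖δψ‖ ≤ 1` preserves such a bound; this gives the estimate. The
supremum tends to zero because `B⁻¹ − A⁻¹ = B⁻¹ (A − B) A⁻¹`,
`‖G*(Λ_k − Λ)G‖ ≤ ‖G‖² ‖Λ_k − Λ‖`, and `(G*ΛG)⁻¹` is uniformly bounded on the compact circle, which
in turn bounds `(G*Λ_k G)⁻¹` once `Λ_k` is close to `Λ`.
-/

open Real Filter
open scoped Matrix ComplexOrder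

attribute [local instance] Matrix.frobeniusSeminormedAddCommGroup
  Matrix.frobeniusNormedAddCommGroup Matrix.frobeniusNormedSpace

/-- The partial derivative of the moment map `f(ψ,Λ) = ∫ G ψ (G*ΛG)⁻¹ G* dθ/(2π)` in `ψ`:
the linear operator `δψ ↦ ∫ G δψ (G*ΛG)⁻¹ G* dθ/(2π)`. -/
noncomputable def f1deriv {n m : ℕ} (G : C(Circle, Matrix (Fin n) (Fin m) ℂ))
    (Λ : Matrix (Fin n) (Fin n) ℂ) (δψ : C(Circle, ℝ)) : Matrix (Fin n) (Fin n) ℂ :=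
  (2 * π)⁻¹ • ∫ θ in (-π)..π,
    δψ (Circle.exp θ) •
      (G (Circle.exp θ) * ((G (Circle.exp θ))ᴴ * Λ * G (Circle.exp θ))⁻¹ * (G (Circle.exp θ))ᴴ)

theorem Continuous.matrix_inv {X R ι : Type*} [TopologicalSpace X] [Field R] [TopologicalSpace R]
    [IsTopologicalDivisionRing R] [Fintype ι] [DecidableEq ι]
    {A : X → Matrix ι ι R} (hA : Continuous A) (h : ∀ x, IsUnit (A x).det) :
    Continuous fun x => (A x)⁻¹ := by
  simp only [Matrix.inv_def, Ring.inverse_eq_inv']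
  exact (hA.matrix_det.inv₀ fun x => (h x).ne_zero).smul hA.matrix_adjugate

namespace Matrix

variable {𝕜 ι κ μ ν : Type*} [RCLike 𝕜] [Fintype ι] [Fintype κ] [Fintype μ]
  [Fintype ν]

theorem frobenius_norm_mul_mul_le (A : Matrix ι κ 𝕜) (B : Matrix κ μ 𝕜) (C : Matrix μ ν 𝕜) :
    ‖A * B * C‖ ≤ ‖A‖ * ‖B‖ * ‖C‖ :=
  (frobenius_norm_mul _ _).trans
    (mul_le_mul_of_nonneg_right (frobenius_norm_mul _ _) (norm_nonneg _))

theorem frobenius_norm_mul_mul_conjTranspose_le (B : Matrix ι κ 𝕜) (D : Matrix κ κ 𝕜) :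
    ‖B * D * Bᴴ‖ ≤ ‖B‖ ^ 2 * ‖D‖ := by
  have := frobenius_norm_mul_mul_le B D Bᴴ
  rwa [frobenius_norm_conjTranspose, mul_right_comm, ← sq] at this

theorem frobenius_norm_conjTranspose_mul_mul_le (B : Matrix ι κ 𝕜) (D : Matrix ι ι 𝕜) :
    ‖Bᴴ * D * B‖ ≤ ‖B‖ ^ 2 * ‖D‖ := by
  simpa using frobenius_norm_mul_mul_conjTranspose_le Bᴴ D

theorem frobenius_norm_inv_sub_inv_le [DecidableEq ι] {A B : Matrix ι ι 𝕜}
    (hA : IsUnit A.det) (hB : IsUnit B.det) {C : ℝ} (hAC : ‖A⁻¹‖ ≤ C)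
    (hsmall : C * ‖B - A‖ ≤ 1 / 2) :
    ‖B⁻¹ - A⁻¹‖ ≤ 2 * C ^ 2 * ‖B - A‖ := by
  have hfactor : B⁻¹ - A⁻¹ = B⁻¹ * (A - B) * A⁻¹ := by
    rw [Matrix.mul_sub, Matrix.sub_mul, Matrix.mul_assoc, mul_nonsing_inv _ hA,
      nonsing_inv_mul _ hB, Matrix.mul_one, Matrix.one_mul]
  have hB_inv : ‖B⁻¹‖ ≤ ‖B⁻¹ - A⁻¹‖ + C := by
    simpa using (norm_le_norm_add_norm_sub' B⁻¹ A⁻¹).trans (by rw [norm_sub_rev]; linarith)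
  have hd : ‖B⁻¹ - A⁻¹‖ ≤ (‖B⁻¹ - A⁻¹‖ + C) * ‖B - A‖ * C := by
    calc ‖B⁻¹ - A⁻¹‖ ≤ ‖B⁻¹‖ * ‖A - B‖ * ‖A⁻¹‖ := hfactor ▸ frobenius_norm_mul_mul_le _ _ _
      _ ≤ (‖B⁻¹ - A⁻¹‖ + C) * ‖B - A‖ * C := by
        rw [norm_sub_rev A]
        have : 0 ≤ C := (norm_nonneg _).trans hAC
        gcongr
  -- with `d := ‖B⁻¹ - A⁻¹‖`: `d ≤ (d + C) ‖B - A‖ C ≤ d / 2 + C² ‖B - A‖`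
  nlinarith [norm_nonneg (B⁻¹ - A⁻¹), norm_nonneg (B - A)]

end Matrix

section Gram

variable {X 𝕜 ι κ : Type*} [TopologicalSpace X] [RCLike 𝕜] [Fintype ι] [Fintype κ]
  [DecidableEq κ]

theorem continuous_inv_conjTranspose_mul_mul (G : C(X, Matrix ι κ 𝕜)) (Λ : Matrix ι ι 𝕜)
    (h : ∀ x, IsUnit ((G x)ᴴ * Λ * G x).det) :
    Continuous fun x => ((G x)ᴴ * Λ * G x)⁻¹ :=
  ((G.continuous.matrix_conjTranspose.matrix_mul continuous_const).matrix_mul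
    G.continuous).matrix_inv h

theorem bddAbove_range_norm_inv_conjTranspose_mul_mul_sub [CompactSpace X]
    (G : C(X, Matrix ι κ 𝕜)) {Λ' Λ : Matrix ι ι 𝕜}
    (h' : ∀ x, IsUnit ((G x)ᴴ * Λ' * G x).det) (h : ∀ x, IsUnit ((G x)ᴴ * Λ * G x).det) :
    BddAbove (Set.range fun x => ‖((G x)ᴴ * Λ' * G x)⁻¹ - ((G x)ᴴ * Λ * G x)⁻¹‖) :=
  (isCompact_range ((continuous_inv_conjTranspose_mul_mul G Λ' h').sub
    (continuous_inv_conjTranspose_mul_mul G Λ h)).norm).bddAbove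

theorem tendsto_iSup_norm_inv_conjTranspose_mul_mul_sub [CompactSpace X] {α : Type*}
    {l : Filter α} (G : C(X, Matrix ι κ 𝕜)) {Λs : α → Matrix ι ι 𝕜} {Λ : Matrix ι ι 𝕜}
    (hs : ∀ k x, IsUnit ((G x)ᴴ * Λs k * G x).det) (h : ∀ x, IsUnit ((G x)ᴴ * Λ * G x).det)
    (hconv : Tendsto Λs l (nhds Λ)) :
    Tendsto (fun k => ⨆ x, ‖((G x)ᴴ * Λs k * G x)⁻¹ - ((G x)ᴴ * Λ * G x)⁻¹‖) l (nhds 0) := by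
  have le_iSup_of_continuous {f : X → ℝ} (hf : Continuous f) (x : X) : f x ≤ ⨆ y, f y :=
    le_ciSup (isCompact_range hf).bddAbove x
  obtain ⟨g, hg⟩ : ∃ g, ∀ x, ‖G x‖ ≤ g := ⟨_, le_iSup_of_continuous G.continuous.norm⟩
  obtain ⟨C, hC0, hC⟩ : ∃ C, 0 ≤ C ∧ ∀ x, ‖((G x)ᴴ * Λ * G x)⁻¹‖ ≤ C :=
    ⟨_, Real.iSup_nonneg fun x => norm_nonneg _,
      le_iSup_of_continuous (continuous_inv_conjTranspose_mul_mul G Λ h).norm⟩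
  have hgram : ∀ k x, ‖(G x)ᴴ * Λs k * G x - (G x)ᴴ * Λ * G x‖ ≤ g ^ 2 * ‖Λs k - Λ‖ := by
    intro k x
    rw [← Matrix.sub_mul, ← Matrix.mul_sub]
    exact (Matrix.frobenius_norm_conjTranspose_mul_mul_le _ _).trans (by gcongr; exact hg x)
  have hlim : Tendsto (fun k => g ^ 2 * ‖Λs k - Λ‖) l (nhds 0) := by
    simpa using (tendsto_iff_norm_sub_tendsto_zero.1 hconv).const_mul (g ^ 2)
  have hbound : ∀ᶠ k in l, (⨆ x, ‖((G x)ᴴ * Λs k * G x)⁻¹ - ((G x)ᴴ * Λ * G x)⁻¹‖) ≤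
      2 * C ^ 2 * (g ^ 2 * ‖Λs k - Λ‖) := by
    filter_upwards [(mul_zero C ▸ hlim.const_mul C).eventually_le_const one_half_pos] with k hk
    refine Real.iSup_le (fun x => ?_) (by positivity)
    calc _ ≤ 2 * C ^ 2 * ‖(G x)ᴴ * Λs k * G x - (G x)ᴴ * Λ * G x‖ :=
          Matrix.frobenius_norm_inv_sub_inv_le (h x) (hs k x) (hC x)
            ((mul_le_mul_of_nonneg_left (hgram k x) hC0).trans hk)
      _ ≤ 2 * C ^ 2 * (g ^ 2 * ‖Λs k - Λ‖) := by gcongr; exact hgram k x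
  refine squeeze_zero' (Eventually.of_forall fun k => Real.iSup_nonneg fun x => norm_nonneg _)
    hbound ?_
  simpa using hlim.const_mul (2 * C ^ 2)

end Gram

noncomputable def circleMean {E : Type*} [NormedAddCommGroup E] [NormedSpace ℝ E]
    (F : Circle → E) : E :=
  (2 * π)⁻¹ • ∫ θ in (-π)..π, F (Circle.exp θ)

section circleMean

variable {E : Type*} [NormedAddCommGroup E] [NormedSpace ℝ E]

theorem circleMean_sub {F F' : Circle → E} (hF : Continuous F) (hF' : Continuous F') :
    circleMean F - circleMean F' = circleMean fun z => F z - F' z := by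
  rw [circleMean, circleMean, circleMean, ← smul_sub]
  congr 1
  exact (intervalIntegral.integral_sub ((hF.comp Circle.exp.continuous).intervalIntegrable _ _)
    ((hF'.comp Circle.exp.continuous).intervalIntegrable _ _)).symm

theorem norm_circleMean_le {F : Circle → E} {C : ℝ} (hF : ∀ z, ‖F z‖ ≤ C) :
    ‖circleMean F‖ ≤ C := by
  have hint := intervalIntegral.norm_integral_le_of_norm_le_const
    (a := -π) (b := π) fun θ _ => hF (Circle.exp θ)
  rw [circleMean, norm_smul, norm_inv, Real.norm_of_nonneg two_pi_pos.le]
  rw [show π - -π = 2 * π by ring, abs_of_pos two_pi_pos] at hint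
  rwa [inv_mul_le_iff₀ two_pi_pos, mul_comm]

end circleMean

theorem f1deriv_eq_circleMean {n m : ℕ} (G : C(Circle, Matrix (Fin n) (Fin m) ℂ))
    (Λ : Matrix (Fin n) (Fin n) ℂ) (δψ : C(Circle, ℝ)) :
    f1deriv G Λ δψ = circleMean fun z => δψ z • (G z * ((G z)ᴴ * Λ * G z)⁻¹ * (G z)ᴴ) :=
  rfl

theorem norm_f1deriv_sub_le {n m : ℕ} (G : C(Circle, Matrix (Fin n) (Fin m) ℂ))
    {Λ' Λ : Matrix (Fin n) (Fin n) ℂ} (h' : ∀ z, IsUnit ((G z)ᴴ * Λ' * G z).det)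
    (h : ∀ z, IsUnit ((G z)ᴴ * Λ * G z).det) {Gmax S : ℝ} (hG : ∀ z, ‖G z‖ ≤ Gmax)
    (hS : ∀ z, ‖((G z)ᴴ * Λ' * G z)⁻¹ - ((G z)ᴴ * Λ * G z)⁻¹‖ ≤ S)
    {δψ : C(Circle, ℝ)} (hδψ : ‖δψ‖ ≤ 1) :
    ‖f1deriv G Λ' δψ - f1deriv G Λ δψ‖ ≤ Gmax ^ 2 * S := by
  have hcont : ∀ {M : Matrix (Fin n) (Fin n) ℂ}, (∀ z, IsUnit ((G z)ᴴ * M * G z).det) →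
      Continuous fun z => δψ z • (G z * ((G z)ᴴ * M * G z)⁻¹ * (G z)ᴴ) := fun hM =>
    δψ.continuous.smul <| (G.continuous.matrix_mul
      (continuous_inv_conjTranspose_mul_mul G _ hM)).matrix_mul G.continuous.matrix_conjTranspose
  rw [f1deriv_eq_circleMean, f1deriv_eq_circleMean, circleMean_sub (hcont h') (hcont h)]
  refine norm_circleMean_le fun z => ?_
  rw [← smul_sub, norm_smul, ← Matrix.sub_mul, ← Matrix.mul_sub]
  refine mul_le_mul ((δψ.norm_coe_le_norm z).trans hδψ) ?_ (norm_nonneg _) zero_le_one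
    |>.trans_eq (one_mul _)
  exact (Matrix.frobenius_norm_mul_mul_conjTranspose_le _ _).trans
    (by gcongr; exacts [hG z, hS z])

theorem stmt_12_general (n m : ℕ) (G : C(Circle, Matrix (Fin n) (Fin m) ℂ))
    (Λseq : ℕ → Matrix (Fin n) (Fin n) ℂ) (Λ : Matrix (Fin n) (Fin n) ℂ)
    (hposk : ∀ k (z : Circle), ((G z)ᴴ * Λseq k * G z).PosDef)
    (hpos : ∀ z : Circle, ((G z)ᴴ * Λ * G z).PosDef)
    (Gmax : ℝ) (hGmax : ∀ z, ‖G z‖ ≤ Gmax)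
    (hconv : Tendsto Λseq atTop (nhds Λ)) :
    (∀ k (δψ : C(Circle, ℝ)), ‖δψ‖ ≤ 1 →
        ‖f1deriv G (Λseq k) δψ - f1deriv G Λ δψ‖ ≤
          (n : ℝ) * Gmax ^ 2 *
            ⨆ z : Circle, ‖((G z)ᴴ * Λseq k * G z)⁻¹ - ((G z)ᴴ * Λ * G z)⁻¹‖) ∧
    (∀ ε > (0 : ℝ), ∀ᶠ k in atTop, ∀ δψ : C(Circle, ℝ), ‖δψ‖ ≤ 1 →
        ‖f1deriv G (Λseq k) δψ - f1deriv G Λ δψ‖ ≤ ε) := by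
  have hunitk k z : IsUnit ((G z)ᴴ * Λseq k * G z).det :=
    (Matrix.isUnit_iff_isUnit_det _).1 (hposk k z).isUnit
  have hunit z : IsUnit ((G z)ᴴ * Λ * G z).det := (Matrix.isUnit_iff_isUnit_det _).1 (hpos z).isUnit
  have hbound : ∀ k (δψ : C(Circle, ℝ)), ‖δψ‖ ≤ 1 →
      ‖f1deriv G (Λseq k) δψ - f1deriv G Λ δψ‖ ≤
        (n : ℝ) * Gmax ^ 2 *
          ⨆ z : Circle, ‖((G z)ᴴ * Λseq k * G z)⁻¹ - ((G z)ᴴ * Λ * G z)⁻¹‖ := by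
    intro k δψ hδψ
    rcases n.eq_zero_or_pos with rfl | hn
    · simp [Subsingleton.elim (f1deriv G (Λseq k) δψ - f1deriv G Λ δψ) 0]
    have hS := fun z => le_ciSup
      (bddAbove_range_norm_inv_conjTranspose_mul_mul_sub G (hunitk k) hunit) z
    rw [mul_assoc]
    refine (norm_f1deriv_sub_le G (hunitk k) hunit hGmax hS hδψ).trans
      (le_mul_of_one_le_left ?_ (Nat.one_le_cast.2 hn))
    exact mul_nonneg (sq_nonneg _) (Real.iSup_nonneg fun z => norm_nonneg _)
  refine ⟨hbound, fun ε hε => ?_⟩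
  have hlim := (tendsto_iSup_norm_inv_conjTranspose_mul_mul_sub G hunitk hunit hconv).const_mul
    ((n : ℝ) * Gmax ^ 2)
  rw [mul_zero] at hlim
  filter_upwards [hlim.eventually_le_const hε] with k hk δψ hδψ
  exact (hbound k δψ hδψ).trans hk

/-- The partial derivative `f'_1` of the moment map with respect to the prior depends
continuously (in the operator norm) on `(ψ, Λ)`, with the bound
`‖f'_1(ψ,Λ_k) − f'_1(ψ,Λ)‖ ≤ n G_max² · sup_z ‖(G*Λ_k G)⁻¹ − (G*ΛG)⁻¹‖_F`. -/
theorem stmt_12 (n m : ℕ) (G : C(Circle, Matrix (Fin n) (Fin m) ℂ))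
    (ψ : C(Circle, ℝ)) (hψ : ∀ z, 0 < ψ z)
    (Λseq : ℕ → Matrix (Fin n) (Fin n) ℂ) (Λ : Matrix (Fin n) (Fin n) ℂ)
    (hherm : ∀ k, (Λseq k).IsHermitian) (hΛherm : Λ.IsHermitian)
    (hposk : ∀ k (z : Circle), ((G z)ᴴ * Λseq k * G z).PosDef)
    (hpos : ∀ z : Circle, ((G z)ᴴ * Λ * G z).PosDef)
    (Gmax : ℝ) (hGmax : ∀ z, ‖G z‖ ≤ Gmax)
    (hconv : Tendsto Λseq atTop (nhds Λ)) :
    (∀ k (δψ : C(Circle, ℝ)), ‖δψ‖ ≤ 1 →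
        ‖f1deriv G (Λseq k) δψ - f1deriv G Λ δψ‖ ≤
          (n : ℝ) * Gmax ^ 2 *
            ⨆ z : Circle, ‖((G z)ᴴ * Λseq k * G z)⁻¹ - ((G z)ᴴ * Λ * G z)⁻¹‖) ∧
    (∀ ε > (0 : ℝ), ∀ᶠ k in atTop, ∀ δψ : C(Circle, ℝ), ‖δψ‖ ≤ 1 →
        ‖f1deriv G (Λseq k) δψ - f1deriv G Λ δψ‖ ≤ ε) :=
  stmt_12_general n m G Λseq Λ hposk hpos Gmax hGmax hconv
end

section
/- Let C ∈ ℂ^{m×n} with CB invertible, and set Π = A − B(CB)^{-1}CA. Then for every z not an eigenvalue of Π or A, the identity G(z)(zC G(z))^{-1} = (zI − Π)^{-1} B (CB)^{-1} holds, where G(z) = (zI−A)^{-1}B (whenever zCG(z) is invertible). -/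
/-- With `Π = A − B(CB)⁻¹CA` the closed-loop matrix, whenever the relevant matrices are
invertible one has `G(z) (z C G(z))⁻¹ = (zI − Π)⁻¹ B (CB)⁻¹`, where `G(z) = (zI−A)⁻¹B`. -/
theorem stmt_16 (n m : ℕ) (A : Matrix (Fin n) (Fin n) ℂ) (B : Matrix (Fin n) (Fin m) ℂ)
    (C : Matrix (Fin m) (Fin n) ℂ) (hCB : IsUnit (C * B)) (z : ℂ)
    (hzA : IsUnit (z • (1 : Matrix (Fin n) (Fin n) ℂ) - A))
    (hzPi : IsUnit (z • (1 : Matrix (Fin n) (Fin n) ℂ) - (A - B * (C * B)⁻¹ * C * A)))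
    (hW : IsUnit (z • (C * ((z • (1 : Matrix (Fin n) (Fin n) ℂ) - A)⁻¹ * B)))) :
    ((z • (1 : Matrix (Fin n) (Fin n) ℂ) - A)⁻¹ * B) *
        (z • (C * ((z • (1 : Matrix (Fin n) (Fin n) ℂ) - A)⁻¹ * B)))⁻¹ =
      (z • (1 : Matrix (Fin n) (Fin n) ℂ) - (A - B * (C * B)⁻¹ * C * A))⁻¹ * B * (C * B)⁻¹ := by
  set S : Matrix (Fin n) (Fin n) ℂ := z • (1 : Matrix (Fin n) (Fin n) ℂ) - A with hSdef
  set P : Matrix (Fin n) (Fin n) ℂ :=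
    z • (1 : Matrix (Fin n) (Fin n) ℂ) - (A - B * (C * B)⁻¹ * C * A) with hPdef
  set W : Matrix (Fin m) (Fin m) ℂ := z • (C * (S⁻¹ * B)) with hWdef
  have hSS : S * S⁻¹ = 1 :=
    Matrix.mul_nonsing_inv _ ((Matrix.isUnit_iff_isUnit_det S).mp hzA)
  have hPP : P⁻¹ * P = 1 :=
    Matrix.nonsing_inv_mul _ ((Matrix.isUnit_iff_isUnit_det P).mp hzPi)
  have hWW : W * W⁻¹ = 1 :=
    Matrix.mul_nonsing_inv _ ((Matrix.isUnit_iff_isUnit_det W).mp hW)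
  have hCB1 : (C * B)⁻¹ * (C * B) = 1 :=
    Matrix.nonsing_inv_mul _ ((Matrix.isUnit_iff_isUnit_det _).mp hCB)
  have hP : P = S + B * (C * B)⁻¹ * C * A := by
    rw [hPdef, hSdef]; abel
  have hA : A = z • (1 : Matrix (Fin n) (Fin n) ℂ) - S := by rw [hSdef]; abel
  have hASB : A * (S⁻¹ * B) = z • (S⁻¹ * B) - B := by
    rw [hA, Matrix.sub_mul, Matrix.smul_mul, Matrix.one_mul, ← Matrix.mul_assoc, hSS,
      Matrix.one_mul]
  have key : P * (S⁻¹ * B) = B * (C * B)⁻¹ * W := by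
    rw [hP, Matrix.add_mul, ← Matrix.mul_assoc S, hSS, Matrix.one_mul,
      Matrix.mul_assoc (B * (C * B)⁻¹ * C) A, hASB, Matrix.mul_assoc (B * (C * B)⁻¹) C,
      Matrix.mul_sub, Matrix.mul_sub, hWdef]
    simp only [Matrix.mul_smul, Matrix.mul_assoc]
    rw [← Matrix.mul_assoc (C*B)⁻¹ C B, show (C*B)⁻¹ * C * B = (C*B)⁻¹*(C*B) from Matrix.mul_assoc _ _ _, hCB1]
    simp [Matrix.mul_assoc]
  have hSB : S⁻¹ * B = P⁻¹ * (B * (C * B)⁻¹ * W) := by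
    rw [← key, ← Matrix.mul_assoc, hPP, Matrix.one_mul]
  rw [hSB]
  simp only [Matrix.mul_assoc]
  rw [hWW]
  simp [Matrix.mul_assoc]
end

section
/- Let Z(z) = H(zI−F)^{-1}G + J with F stable (spectral radius < 1), and R := J + J* > 0. For any Hermitian P, the identity Φ(z) := Z(z) + Z*(z) = [H(zI−F)^{-1}, I] · M(P) · [(z^{-1}I−F*)^{-1}H*; I]* holds on the unit circle, where M(P) = [[FPF* − P, G + FPH*], [G* + HPF*, R + HPH*]]. Moreover, if P solves the DARE P = FPF* − (G+FPH*)(R+HPH*)^{-1}(G*+HPF*) with R + HPH* > 0, then M(P) factors as M(P) = [G+FPH*; R+HPH*] (R+HPH*)^{-1} [G*+HPF*, R+HPH*], and consequently Φ(z) = W(z)W*(z) with W(z) = H(zI−F)^{-1}(G+FPH*)L^{-*} + L, where L L* = R + HPH* is a Cholesky factorization. -/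
open Matrix
open scoped ComplexOrder
set_option maxHeartbeats 1600000

lemma cancel_lr {k : Type*} [Fintype k] [DecidableEq k]
    (A B X : Matrix k k ℂ) (hA : IsUnit A) (hB : IsUnit B)
    (h : A * X * B = 0) : X = 0 := by
  have hA' := A.nonsing_inv_mul ((isUnit_iff_isUnit_det A).mp hA)
  have hB' := B.mul_nonsing_inv ((isUnit_iff_isUnit_det B).mp hB)
  calc X = (A⁻¹ * A) * X * (B * B⁻¹) := by rw [hA', hB']; simp [Matrix.mul_assoc]
    _ = A⁻¹ * (A * X * B) * B⁻¹ := by simp only [Matrix.mul_assoc]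
    _ = 0 := by rw [h]; simp

lemma key_zero {k : Type*} [Fintype k] [DecidableEq k]
    (F Q : Matrix k k ℂ) (z w : ℂ) (hzw : z * w = 1)
    (hA : IsUnit (z • (1:Matrix k k ℂ) - F)) (hB : IsUnit (w • (1:Matrix k k ℂ) - Fᴴ)) :
    (z • (1:Matrix k k ℂ) - F)⁻¹ * (F * Q * Fᴴ - Q) * (w • (1:Matrix k k ℂ) - Fᴴ)⁻¹
      + (z • (1:Matrix k k ℂ) - F)⁻¹ * (F * Q)
      + Q * Fᴴ * (w • (1:Matrix k k ℂ) - Fᴴ)⁻¹ + Q = 0 := by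
  set A := z • (1:Matrix k k ℂ) - F with hAdef
  set B := w • (1:Matrix k k ℂ) - Fᴴ with hBdef
  have hA1 := A.mul_nonsing_inv ((isUnit_iff_isUnit_det A).mp hA)
  have hB2 := B.nonsing_inv_mul ((isUnit_iff_isUnit_det B).mp hB)
  apply cancel_lr A B _ hA hB
  have expand : A * (A⁻¹ * (F * Q * Fᴴ - Q) * B⁻¹ + A⁻¹ * (F * Q) + Q * Fᴴ * B⁻¹ + Q) * B
      = (A * A⁻¹) * (F * Q * Fᴴ - Q) * (B⁻¹ * B) + (A * A⁻¹) * (F * Q) * B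
        + A * (Q * Fᴴ) * (B⁻¹ * B) + A * Q * B := by noncomm_ring
  rw [expand, hA1, hB2]
  simp only [Matrix.one_mul, Matrix.mul_one, hAdef, hBdef]
  have hwz : w * z = 1 := by rw [mul_comm]; exact hzw
  simp only [Matrix.sub_mul, Matrix.mul_sub, Matrix.add_mul, Matrix.mul_add,
    smul_mul_assoc, mul_smul_comm, Matrix.one_mul, Matrix.mul_one, smul_smul, hzw, hwz,
    one_smul, smul_add, smul_sub, neg_smul, smul_neg, Matrix.mul_assoc]
  abel


/-- Spectral factorization from additive decomposition. Let `Z(z) = H(zI−F)⁻¹G + J` with `F`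
stable and `R = J + J* > 0`, and `Φ(z) = Z(z) + Z*(z) > 0` on the circle. Then:
(a) for any Hermitian `Q`, `Φ(z)` equals the expanded middle-matrix expression
`H(zI−F)⁻¹(FQF*−Q)(z⁻¹I−F*)⁻¹H* + H(zI−F)⁻¹(G+FQH*) + (G*+HQF*)(z⁻¹I−F*)⁻¹H* + (R+HQH*)`;
(b) if `P` solves the DARE with `R + HPH* > 0`, the middle matrix factors, i.e.
`FPF* − P = (G+FPH*)(R+HPH*)⁻¹(G*+HPF*)`; and
(c) `Φ(z) = W(z)W*(z)` with `W(z) = H(zI−F)⁻¹(G+FPH*)L⁻* + L`, `LL* = R + HPH*`. -/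
theorem stmt_17 (n m : ℕ)
    (Fm : Matrix (Fin n) (Fin n) ℂ) (Gm : Matrix (Fin n) (Fin m) ℂ)
    (Hm : Matrix (Fin m) (Fin n) ℂ) (Jm L : Matrix (Fin m) (Fin m) ℂ)
    (hF : ∀ c ∈ spectrum ℂ Fm, ‖c‖ < 1)
    (hΦpos : ∀ z : ℂ, ‖z‖ = 1 →
      ((Hm * (z • (1 : Matrix (Fin n) (Fin n) ℂ) - Fm)⁻¹ * Gm + Jm) +
        (Gmᴴ * (z⁻¹ • (1 : Matrix (Fin n) (Fin n) ℂ) - Fmᴴ)⁻¹ * Hmᴴ + Jmᴴ)).PosDef)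
    (P : Matrix (Fin n) (Fin n) ℂ) (hP : P.IsHermitian)
    (hDARE : P = Fm * P * Fmᴴ - (Gm + Fm * P * Hmᴴ) * ((Jm + Jmᴴ) + Hm * P * Hmᴴ)⁻¹ *
      (Gmᴴ + Hm * P * Fmᴴ))
    (hRpos : ((Jm + Jmᴴ) + Hm * P * Hmᴴ).PosDef)
    (hL : L * Lᴴ = (Jm + Jmᴴ) + Hm * P * Hmᴴ) (hLunit : IsUnit L) :
    (∀ Q : Matrix (Fin n) (Fin n) ℂ, Q.IsHermitian → ∀ z : ℂ, ‖z‖ = 1 →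
      (Hm * (z • (1 : Matrix (Fin n) (Fin n) ℂ) - Fm)⁻¹ * Gm + Jm) +
        (Gmᴴ * (z⁻¹ • (1 : Matrix (Fin n) (Fin n) ℂ) - Fmᴴ)⁻¹ * Hmᴴ + Jmᴴ) =
      Hm * (z • (1 : Matrix (Fin n) (Fin n) ℂ) - Fm)⁻¹ * (Fm * Q * Fmᴴ - Q) *
          (z⁻¹ • (1 : Matrix (Fin n) (Fin n) ℂ) - Fmᴴ)⁻¹ * Hmᴴ +
        Hm * (z • (1 : Matrix (Fin n) (Fin n) ℂ) - Fm)⁻¹ * (Gm + Fm * Q * Hmᴴ) +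
        (Gmᴴ + Hm * Q * Fmᴴ) * (z⁻¹ • (1 : Matrix (Fin n) (Fin n) ℂ) - Fmᴴ)⁻¹ * Hmᴴ +
        ((Jm + Jmᴴ) + Hm * Q * Hmᴴ)) ∧
    (Fm * P * Fmᴴ - P =
      (Gm + Fm * P * Hmᴴ) * ((Jm + Jmᴴ) + Hm * P * Hmᴴ)⁻¹ * (Gmᴴ + Hm * P * Fmᴴ)) ∧
    (∀ z : ℂ, ‖z‖ = 1 →
      (Hm * (z • (1 : Matrix (Fin n) (Fin n) ℂ) - Fm)⁻¹ * Gm + Jm) +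
        (Gmᴴ * (z⁻¹ • (1 : Matrix (Fin n) (Fin n) ℂ) - Fmᴴ)⁻¹ * Hmᴴ + Jmᴴ) =
      (Hm * (z • (1 : Matrix (Fin n) (Fin n) ℂ) - Fm)⁻¹ * (Gm + Fm * P * Hmᴴ) * (Lᴴ)⁻¹ + L) *
        (L⁻¹ * (Gmᴴ + Hm * P * Fmᴴ) * (z⁻¹ • (1 : Matrix (Fin n) (Fin n) ℂ) - Fmᴴ)⁻¹ * Hmᴴ
          + Lᴴ)) := by
  -- invertibility of z•1 - Fm and z⁻¹•1 - Fmᴴ on the circle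
  have hAunit : ∀ z : ℂ, ‖z‖ = 1 → IsUnit (z • (1 : Matrix (Fin n) (Fin n) ℂ) - Fm) := by
    intro z hz
    have hns : z ∉ spectrum ℂ Fm := fun hmem => absurd hz (by have := hF z hmem; linarith)
    have := spectrum.notMem_iff.mp hns
    rwa [Algebra.algebraMap_eq_smul_one] at this
  have hBeq : ∀ z : ℂ, ‖z‖ = 1 →
      (z⁻¹ • (1 : Matrix (Fin n) (Fin n) ℂ) - Fmᴴ) = (z • (1 : Matrix (Fin n) (Fin n) ℂ) - Fm)ᴴ := by
    intro z hz
    rw [conjTranspose_sub, conjTranspose_smul, conjTranspose_one, Complex.inv_eq_conj hz]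
    rfl
  have hBunit : ∀ z : ℂ, ‖z‖ = 1 → IsUnit (z⁻¹ • (1 : Matrix (Fin n) (Fin n) ℂ) - Fmᴴ) := by
    intro z hz
    rw [hBeq z hz]
    exact (hAunit z hz).star
  -- part (a)
  have parta : ∀ Q : Matrix (Fin n) (Fin n) ℂ, Q.IsHermitian → ∀ z : ℂ, ‖z‖ = 1 →
      (Hm * (z • (1 : Matrix (Fin n) (Fin n) ℂ) - Fm)⁻¹ * Gm + Jm) +
        (Gmᴴ * (z⁻¹ • (1 : Matrix (Fin n) (Fin n) ℂ) - Fmᴴ)⁻¹ * Hmᴴ + Jmᴴ) =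
      Hm * (z • (1 : Matrix (Fin n) (Fin n) ℂ) - Fm)⁻¹ * (Fm * Q * Fmᴴ - Q) *
          (z⁻¹ • (1 : Matrix (Fin n) (Fin n) ℂ) - Fmᴴ)⁻¹ * Hmᴴ +
        Hm * (z • (1 : Matrix (Fin n) (Fin n) ℂ) - Fm)⁻¹ * (Gm + Fm * Q * Hmᴴ) +
        (Gmᴴ + Hm * Q * Fmᴴ) * (z⁻¹ • (1 : Matrix (Fin n) (Fin n) ℂ) - Fmᴴ)⁻¹ * Hmᴴ +
        ((Jm + Jmᴴ) + Hm * Q * Hmᴴ) := by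
    intro Q _ z hz
    have hz0 : z ≠ 0 := by intro h; rw [h] at hz; simp at hz
    have hzw : z * z⁻¹ = 1 := mul_inv_cancel₀ hz0
    have h0 := key_zero Fm Q z z⁻¹ hzw (hAunit z hz) (hBunit z hz)
    set Ai := (z • (1 : Matrix (Fin n) (Fin n) ℂ) - Fm)⁻¹
    set Bi := (z⁻¹ • (1 : Matrix (Fin n) (Fin n) ℂ) - Fmᴴ)⁻¹
    have h1 : Hm * (Ai * (Fm * Q * Fmᴴ - Q) * Bi + Ai * (Fm * Q) + Q * Fmᴴ * Bi + Q) * Hmᴴ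
        = 0 := by rw [h0]; simp
    rw [← sub_eq_zero, ← neg_eq_zero]
    calc _ = Hm * (Ai * (Fm * Q * Fmᴴ - Q) * Bi + Ai * (Fm * Q) + Q * Fmᴴ * Bi + Q) * Hmᴴ := by
          simp only [Matrix.mul_add, Matrix.add_mul, Matrix.mul_sub, Matrix.sub_mul,
            Matrix.mul_assoc, neg_sub]
          abel
      _ = 0 := h1
  have partb : Fm * P * Fmᴴ - P =
      (Gm + Fm * P * Hmᴴ) * ((Jm + Jmᴴ) + Hm * P * Hmᴴ)⁻¹ * (Gmᴴ + Hm * P * Fmᴴ) := by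
    have h := sub_add_cancel (Fm * P * Fmᴴ)
      ((Gm + Fm * P * Hmᴴ) * ((Jm + Jmᴴ) + Hm * P * Hmᴴ)⁻¹ * (Gmᴴ + Hm * P * Fmᴴ))
    rw [← hDARE] at h
    rw [← h]; abel
  refine ⟨parta, partb, ?_⟩
  · intro z hz
    have hLdet := (isUnit_iff_isUnit_det L).mp hLunit
    have hLHunit : IsUnit Lᴴ := hLunit.star
    have hL1 : (Lᴴ)⁻¹ * Lᴴ = 1 := (Lᴴ).nonsing_inv_mul ((isUnit_iff_isUnit_det _).mp hLHunit)
    have hL2 : L * L⁻¹ = 1 := L.mul_nonsing_inv hLdet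
    have hL3 : (Lᴴ)⁻¹ * L⁻¹ = ((Jm + Jmᴴ) + Hm * P * Hmᴴ)⁻¹ := by
      rw [← hL, Matrix.mul_inv_rev]
    rw [parta P hP z hz]
    set Ai := (z • (1 : Matrix (Fin n) (Fin n) ℂ) - Fm)⁻¹
    set Bi := (z⁻¹ • (1 : Matrix (Fin n) (Fin n) ℂ) - Fmᴴ)⁻¹
    set K := Gm + Fm * P * Hmᴴ with hK
    set K' := Gmᴴ + Hm * P * Fmᴴ with hK'
    have expand : (Hm * Ai * K * (Lᴴ)⁻¹ + L) * (L⁻¹ * K' * Bi * Hmᴴ + Lᴴ)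
        = Hm * Ai * (K * ((Lᴴ)⁻¹ * L⁻¹) * K') * Bi * Hmᴴ
          + Hm * Ai * K * ((Lᴴ)⁻¹ * Lᴴ) + (L * L⁻¹) * (K' * Bi * Hmᴴ) + L * Lᴴ := by
      simp only [Matrix.mul_add, Matrix.add_mul, Matrix.mul_assoc]
      abel
    rw [expand, hL1, hL2, hL3, hL, ← partb]
    simp only [Matrix.mul_one, Matrix.one_mul, Matrix.mul_assoc]
end
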